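/- arXiv:2009.13624 — 5 statements merged into one kernel-verified Lean document; each statement's English description precedes it below -/
import Mathlib

section
/- For half-integers $k, k' \in \mathbb{Z} + 1/2$, the functions $\mathfrak{e}_k(x) = e^{i\pi(-k/2 - 1/4)} e^{-i\pi k x}$ on $[-1/2, 1/2]$ satisfy the real orthonormality relation $\int_{-1/2}^{1/2} \mathrm{Re}\big(\mathfrak{e}_k(x) \overline{\mathfrak{e}_{k'}(x)}\big)\,dx = \delta_{k,k'}$. -/
open Complex Real MeasureTheory

/-- The quarter-integer Fourier mode `𝔢ₖ(x) = e^{iπ(-k/2-1/4)} e^{-iπkx}`. -/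
noncomputable def fourierMode (k : ℝ) (x : ℝ) : ℂ :=
  Complex.exp ((Real.pi : ℂ) * Complex.I * (-(k : ℂ)/2 - 1/4)) *
    Complex.exp (-(Real.pi : ℂ) * Complex.I * (k : ℂ) * (x : ℂ))

lemma fourierMode_mul_conj (k k' x : ℝ) :
    (fourierMode k x * (starRingEnd ℂ) (fourierMode k' x)).re
      = Real.cos (Real.pi * (k' - k) * (x + 1/2)) := by
  unfold fourierMode
  rw [map_mul, ← Complex.exp_conj, ← Complex.exp_conj,
    mul_mul_mul_comm, ← Complex.exp_add, ← Complex.exp_add, ← Complex.exp_add]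
  have : (Real.pi : ℂ) * Complex.I * (-(k : ℂ)/2 - 1/4) +
      (starRingEnd ℂ) ((Real.pi : ℂ) * Complex.I * (-(k' : ℂ)/2 - 1/4)) +
      (-(Real.pi : ℂ) * Complex.I * (k : ℂ) * (x : ℂ) +
        (starRingEnd ℂ) (-(Real.pi : ℂ) * Complex.I * (k' : ℂ) * (x : ℂ)))
      = ((Real.pi * (k' - k) * (x + 1/2) : ℝ) : ℂ) * Complex.I := by
    simp only [map_mul, map_sub, map_neg, map_div₀, Complex.conj_I, Complex.conj_ofReal,
      map_one, map_ofNat]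
    push_cast
    ring
  rw [this, Complex.exp_ofReal_mul_I_re]

/-- Real orthonormality of the quarter-integer Fourier modes on `[-1/2,1/2]`. -/
theorem fourierMode_real_orthonormal (k k' : ℝ)
    (hk : ∃ n : ℤ, k = n + 1/2) (hk' : ∃ n : ℤ, k' = n + 1/2) :
    (∫ x in (-(1:ℝ)/2)..(1/2),
        (fourierMode k x * (starRingEnd ℂ) (fourierMode k' x)).re)
      = if k = k' then 1 else 0 := by
  simp only [fourierMode_mul_conj]
  obtain ⟨n, rfl⟩ := hk
  obtain ⟨n', rfl⟩ := hk'
  by_cases h : (n : ℝ) + 1/2 = (n' : ℝ) + 1/2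
  · have hn : n = n' := by exact_mod_cast (by linarith : (n:ℝ) = n')
    subst hn
    rw [if_pos rfl]
    simp only [sub_self, mul_zero, zero_mul, Real.cos_zero]
    simp
    norm_num
  · rw [if_neg h]
    have hm : ((n' : ℝ) + 1/2) - ((n : ℝ) + 1/2) = ((n' - n : ℤ) : ℝ) := by push_cast; ring
    have hmne : ((n' - n : ℤ) : ℝ) ≠ 0 := by
      simp only [Int.cast_ne_zero, sub_ne_zero]
      rintro rfl; exact h rfl
    have hc : Real.pi * ((n' - n : ℤ) : ℝ) ≠ 0 :=
      mul_ne_zero Real.pi_ne_zero hmne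
    have key : ∀ x : ℝ, Real.cos (Real.pi * (((n' : ℝ) + 1/2) - ((n : ℝ) + 1/2)) * (x + 1/2))
        = Real.cos (Real.pi * ((n' - n : ℤ) : ℝ) * x + Real.pi * ((n' - n : ℤ) : ℝ) * (1/2)) := by
      intro x; rw [hm]; ring_nf
    simp only [key]
    rw [intervalIntegral.integral_comp_mul_add Real.cos hc, integral_cos]
    have h1 : Real.pi * ((n' - n : ℤ) : ℝ) * (1 / 2) + Real.pi * ((n' - n : ℤ) : ℝ) * (1 / 2)
        = (n' - n : ℤ) * Real.pi := by push_cast; ring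
    have h2 : Real.pi * ((n' - n : ℤ) : ℝ) * (-(1:ℝ) / 2) + Real.pi * ((n' - n : ℤ) : ℝ) * (1 / 2)
        = 0 := by ring
    rw [h1, h2, Real.sin_int_mul_pi, Real.sin_zero]
    simp
end

section
/- Let $\ell$ be a positive integer and $k \in \{1/2, 3/2, \ldots, \ell - 1/2\}$ a half-integer with $0 < k < \ell$. Then there exists a unique $\omega$ in the open interval $((k - 1/2)\pi/\ell,\ k\pi/\ell)$ satisfying $\tan(\omega/2)\tan(\ell\omega) = 1/\sqrt{2}$ (equivalently, $\cos((\ell+1/2)\omega)/\cos((\ell-1/2)\omega) = 3-2\sqrt{2}$). -/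
open Real Set Filter Topology

/-- For a lattice strip of width `ℓ` and each half-integer `k = n + 1/2 < ℓ`,
there is a unique allowed frequency `ω ∈ ((k-1/2)π/ℓ, kπ/ℓ)` solving
`tan(ω/2) tan(ℓω) = 1/√2`. -/
theorem allowed_frequency_exists_unique (ℓ : ℕ) (hℓ : 0 < ℓ)
    (k : ℝ) (hk : ∃ n : ℕ, k = n + 1/2) (hkℓ : k < ℓ) :
    ∃! ω : ℝ, ω ∈ Set.Ioo ((k - 1/2) * Real.pi / ℓ) (k * Real.pi / ℓ) ∧
      Real.tan (ω/2) * Real.tan ((ℓ : ℝ) * ω) = 1 / Real.sqrt 2 := by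
  obtain ⟨n, rfl⟩ := hk
  have hL : (0:ℝ) < ℓ := by exact_mod_cast hℓ
  have hpi := Real.pi_pos
  have hnℓ : (n:ℝ) + 1/2 < ℓ := hkℓ
  set a : ℝ := ((n:ℝ) + 1/2 - 1/2) * Real.pi / ℓ with ha_def
  set b : ℝ := ((n:ℝ) + 1/2) * Real.pi / ℓ with hb_def
  have ha : a = n * π / ℓ := by rw [ha_def]; ring
  have hab : a < b := by rw [ha, hb_def]; gcongr ?_ * Real.pi / _ <;> linarith
  have ha0 : 0 ≤ a := by rw [ha]; positivity
  have hbπ : b < π := by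
    rw [hb_def, div_lt_iff₀ hL]; nlinarith
  have hla : (ℓ:ℝ) * a = n * π := by rw [ha]; field_simp
  have hlb : (ℓ:ℝ) * b = n * π + π/2 := by rw [hb_def]; field_simp
  -- the auxiliary function
  set G : ℝ → ℝ := fun ω => Real.tan (ω/2) * Real.tan ((ℓ:ℝ)*ω - n*π) with hG_def
  have htan : ∀ ω : ℝ, Real.tan ((ℓ:ℝ) * ω) = Real.tan ((ℓ:ℝ)*ω - n*π) :=
    fun ω => (Real.tan_periodic.sub_nat_mul_eq n).symm
  have hFG : ∀ ω : ℝ, Real.tan (ω/2) * Real.tan ((ℓ:ℝ) * ω) = G ω := fun ω => by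
    rw [hG_def, htan]
  -- basic facts on the interval
  have key : ∀ ω ∈ Set.Ico a b, (0 ≤ ω/2 ∧ ω/2 < π/2) ∧
      (0 ≤ (ℓ:ℝ)*ω - n*π ∧ (ℓ:ℝ)*ω - n*π < π/2) := by
    intro ω ⟨h1, h2⟩
    have hω0 : 0 ≤ ω := ha0.trans h1
    have hωπ : ω < π := h2.trans hbπ
    have h3 : (ℓ:ℝ) * a ≤ (ℓ:ℝ) * ω := by gcongr
    have h4 : (ℓ:ℝ) * ω < (ℓ:ℝ) * b := by gcongr
    rw [hla] at h3; rw [hlb] at h4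
    exact ⟨⟨by linarith, by linarith⟩, ⟨by linarith, by linarith⟩⟩
  -- strict monotonicity of G on Ico a b
  have hmono : StrictMonoOn G (Set.Ico a b) := by
    intro x hx y hy hxy
    obtain ⟨⟨hx1, hx2⟩, ⟨hx3, hx4⟩⟩ := key x hx
    obtain ⟨⟨hy1, hy2⟩, ⟨hy3, hy4⟩⟩ := key y hy
    have e1 : Real.tan (x/2) < Real.tan (y/2) :=
      Real.strictMonoOn_tan ⟨by linarith, hx2⟩ ⟨by linarith, hy2⟩ (by linarith)
    have e2 : Real.tan ((ℓ:ℝ)*x - n*π) < Real.tan ((ℓ:ℝ)*y - n*π) := by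
      apply Real.strictMonoOn_tan ⟨by linarith, hx4⟩ ⟨by linarith, hy4⟩
      have : (ℓ:ℝ)*x < (ℓ:ℝ)*y := by gcongr
      linarith
    exact mul_lt_mul'' e1 e2
      (Real.tan_nonneg_of_nonneg_of_le_pi_div_two hx1 hx2.le)
      (Real.tan_nonneg_of_nonneg_of_le_pi_div_two hx3 hx4.le)
  -- continuity of G on Ico a b
  have hcont : ∀ ω ∈ Set.Ico a b, ContinuousAt G ω := by
    intro ω hω
    obtain ⟨⟨h1, h2⟩, ⟨h3, h4⟩⟩ := key ω hω
    have hc1 : Real.cos (ω/2) ≠ 0 :=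
      (Real.cos_pos_of_mem_Ioo ⟨by linarith, h2⟩).ne'
    have hc2 : Real.cos ((ℓ:ℝ)*ω - n*π) ≠ 0 :=
      (Real.cos_pos_of_mem_Ioo ⟨by linarith, h4⟩).ne'
    have c1 : ContinuousAt (fun ω : ℝ => Real.tan (ω/2)) ω :=
      ContinuousAt.comp (g := Real.tan) (f := fun x : ℝ => x/2) (x := ω)
        (Real.continuousAt_tan.2 hc1) (continuousAt_id.div_const 2)
    have c2 : ContinuousAt (fun ω : ℝ => Real.tan ((ℓ:ℝ)*ω - n*π)) ω :=
      ContinuousAt.comp (g := Real.tan) (f := fun x : ℝ => (ℓ:ℝ)*x - n*π) (x := ω)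
        (Real.continuousAt_tan.2 hc2)
        ((continuousAt_const.mul continuousAt_id).sub continuousAt_const)
    exact c1.mul c2
  -- value at a
  have hGa : G a = 0 := by
    rw [hG_def]; simp only [hla, sub_self, Real.tan_zero, mul_zero]
  have hc : (0:ℝ) < 1 / Real.sqrt 2 := by positivity
  -- G tends to atTop at b from the left
  have hb2 : 0 < b := lt_of_le_of_lt ha0 hab
  have hbb : Real.cos (b/2) ≠ 0 :=
    (Real.cos_pos_of_mem_Ioo ⟨by linarith, by linarith⟩).ne'
  have htanb : 0 < Real.tan (b/2) :=
    Real.tan_pos_of_pos_of_lt_pi_div_two (by linarith) (by linarith)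
  have hlim1 : Tendsto (fun ω : ℝ => Real.tan (ω/2)) (𝓝[<] b) (𝓝 (Real.tan (b/2))) :=
    ((ContinuousAt.comp (g := Real.tan) (f := fun x : ℝ => x/2) (x := b)
      (Real.continuousAt_tan.2 hbb) (continuousAt_id.div_const 2)).tendsto).mono_left
      nhdsWithin_le_nhds
  have hlim2 : Tendsto (fun ω : ℝ => (ℓ:ℝ)*ω - n*π) (𝓝[<] b) (𝓝[<] (π/2)) := by
    apply tendsto_nhdsWithin_of_tendsto_nhds_of_eventually_within
    · have : ContinuousAt (fun ω : ℝ => (ℓ:ℝ)*ω - n*π) b :=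
        (continuousAt_const.mul continuousAt_id).sub continuousAt_const
      have := this.tendsto.mono_left (nhdsWithin_le_nhds (s := Set.Iio b))
      simpa [hlb] using this
    · filter_upwards [eventually_mem_nhdsWithin] with x (hx : x < b)
      have : (ℓ:ℝ)*x < (ℓ:ℝ)*b := by gcongr
      simp only [Set.mem_Iio]
      rw [hlb] at this; linarith
  have hlim : Tendsto G (𝓝[<] b) atTop :=
    hlim1.pos_mul_atTop htanb (Real.tendsto_tan_pi_div_two.comp hlim2)
  -- find x1 ∈ Ioo a b with G x1 > 1/√2
  obtain ⟨x1, hx1G, hx1mem⟩ :=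
    ((hlim.eventually (eventually_gt_atTop (1 / Real.sqrt 2))).and
      (Ioo_mem_nhdsLT_of_mem ⟨hab, le_refl b⟩ :
        Set.Ioo a b ∈ 𝓝[<] b)).exists
  -- IVT on [a, x1]
  have hsub : Set.Icc a x1 ⊆ Set.Ico a b := fun z hz =>
    ⟨hz.1, lt_of_le_of_lt hz.2 hx1mem.2⟩
  have hGcont : ContinuousOn G (Set.Icc a x1) := fun z hz =>
    (hcont z (hsub hz)).continuousWithinAt
  have hivt := intermediate_value_Ioo (le_of_lt hx1mem.1) hGcont
  have hmem : (1 / Real.sqrt 2) ∈ Set.Ioo (G a) (G x1) := ⟨by rw [hGa]; exact hc, hx1G⟩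
  obtain ⟨ω, hωmem, hωval⟩ := hivt hmem
  have hωIoo : ω ∈ Set.Ioo a b := ⟨hωmem.1, hωmem.2.trans hx1mem.2⟩
  refine ⟨ω, ⟨hωIoo, by rw [hFG]; exact hωval⟩, ?_⟩
  rintro ω' ⟨hω'Ioo, hω'val⟩
  rw [hFG] at hω'val
  exact hmono.injOn (Set.Ioo_subset_Ico_self hω'Ioo) (Set.Ioo_subset_Ico_self hωIoo)
    (by rw [hω'val, hωval])
end

section
/- Fix a half-integer $k > 0$. For each integer $\ell > k$, let $\omega_k^{(\ell)}$ denote the unique solution of $\tan(\omega/2)\tan(\ell\omega) = 1/\sqrt{2}$ in $((k-1/2)\pi/\ell, k\pi/\ell)$. Then $\omega_k^{(\ell)} = \frac{\pi k}{\ell} + O(\ell^{-2})$ as $\ell \to \infty$; i.e., there exist constants $c > 0$ and $\ell_0$ such that $|\omega_k^{(\ell)} - \pi k/\ell| \le c\,\ell^{-2}$ for all $\ell \ge \ell_0$. -/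
open Real Filter

set_option maxHeartbeats 1000000

/-- Asymptotics of allowed frequencies: if for every width `ℓ > k` the frequency
`ω ℓ` lies in `((k-1/2)π/ℓ, kπ/ℓ)` and solves `tan(ω/2)tan(ℓω) = 1/√2`, then
`ω ℓ = πk/ℓ + O(ℓ⁻²)` as `ℓ → ∞`. -/
theorem allowed_frequency_asymptotics (k : ℝ) (hk : ∃ n : ℕ, k = n + 1/2)
    (ω : ℕ → ℝ)
    (hω : ∀ ℓ : ℕ, k < ℓ →
      ω ℓ ∈ Set.Ioo ((k - 1/2) * Real.pi / ℓ) (k * Real.pi / ℓ) ∧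
      Real.tan (ω ℓ / 2) * Real.tan ((ℓ : ℝ) * ω ℓ) = 1 / Real.sqrt 2) :
    ∃ c > 0, ∃ ℓ₀ : ℕ, ∀ ℓ : ℕ, ℓ₀ ≤ ℓ →
      |ω ℓ - Real.pi * k / ℓ| ≤ c / (ℓ : ℝ)^2 := by
  obtain ⟨n, hn⟩ := hk
  have hk0 : 0 < k := by rw [hn]; positivity
  refine ⟨k * Real.pi, mul_pos hk0 Real.pi_pos, 2 * n + 2, fun ℓ hℓ => ?_⟩
  have hℓn : (2 * n + 2 : ℝ) ≤ (ℓ : ℝ) := by exact_mod_cast hℓ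
  have hkl : k < ℓ := by nlinarith
  have hℓ0 : (0 : ℝ) < ℓ := lt_trans hk0 hkl
  obtain ⟨⟨h1, h2⟩, heq⟩ := hω ℓ hkl
  -- ω is positive and at most π/2
  have hω0 : 0 < ω ℓ := by
    have h' : (0:ℝ) ≤ k - 1/2 := by rw [hn]; have : (0:ℝ) ≤ n := Nat.cast_nonneg n; linarith
    have : (0 : ℝ) ≤ (k - 1/2) * Real.pi / ℓ :=
      div_nonneg (mul_nonneg h' Real.pi_pos.le) hℓ0.le
    linarith
  have h2k : 2 * k ≤ (ℓ : ℝ) := by nlinarith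
  have hωle : ω ℓ < Real.pi / 2 := by
    have : k * Real.pi / ℓ ≤ Real.pi / 2 := by
      rw [div_le_div_iff₀ hℓ0 two_pos]
      nlinarith [Real.pi_pos]
    linarith
  set δ : ℝ := k * Real.pi - ℓ * ω ℓ with hδ
  have hδ0 : 0 < δ := by
    have := (lt_div_iff₀ hℓ0).mp h2
    rw [hδ]; nlinarith
  have hδ0' : 0 < δ := hδ0
  have hδπ : δ < Real.pi / 2 := by
    have h1' : (k - 1/2) * Real.pi < ℓ * ω ℓ := by
      have := (div_lt_iff₀ hℓ0).mp h1
      nlinarith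
    rw [hδ]; nlinarith
  -- tan(ℓ ω) = (tan δ)⁻¹
  have htan : Real.tan ((ℓ : ℝ) * ω ℓ) = (Real.tan δ)⁻¹ := by
    have harg : (ℓ : ℝ) * ω ℓ = (Real.pi / 2 - δ) + n * Real.pi := by
      rw [hδ, hn]; ring
    rw [harg, Real.tan_add_nat_mul_pi, Real.tan_pi_div_two_sub]
  have htanδ_pos : 0 < Real.tan δ := Real.tan_pos_of_pos_of_lt_pi_div_two hδ0 hδπ
  -- the equation gives tan δ = √2 tan(ω/2)
  have hs2 : (0:ℝ) < Real.sqrt 2 := Real.sqrt_pos.mpr two_pos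
  have hkey : Real.tan δ = Real.sqrt 2 * Real.tan (ω ℓ / 2) := by
    rw [htan] at heq
    field_simp at heq
    nlinarith [heq]
  -- bound tan(ω/2) ≤ ω/√2, i.e. √2 tan(ω/2) ≤ ω
  have hhalf : ω ℓ / 2 < Real.pi / 4 := by linarith
  have hcos : Real.sqrt 2 / 2 ≤ Real.cos (ω ℓ / 2) := by
    have := Real.cos_le_cos_of_nonneg_of_le_pi (by positivity) (by linarith [Real.pi_pos]) hhalf.le
    rwa [Real.cos_pi_div_four] at this
  have hcos0 : 0 < Real.cos (ω ℓ / 2) := lt_of_lt_of_le (by positivity) hcos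
  have htanω : Real.tan (ω ℓ / 2) ≤ (ω ℓ / 2) / (Real.sqrt 2 / 2) := by
    rw [Real.tan_eq_sin_div_cos]
    apply div_le_div₀ (by positivity) (Real.sin_le (by positivity)) (by positivity) hcos
  have hsq : Real.sqrt 2 * Real.sqrt 2 = 2 := Real.mul_self_sqrt (by norm_num)
  have hδω : δ ≤ ω ℓ := by
    have hlt := Real.lt_tan hδ0 hδπ
    have : Real.sqrt 2 * Real.tan (ω ℓ / 2) ≤ ω ℓ := by
      have h2' : Real.sqrt 2 * ((ω ℓ / 2) / (Real.sqrt 2 / 2)) = ω ℓ := by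
        rw [div_div_div_cancel_right₀]
        · field_simp
        · positivity
      calc Real.sqrt 2 * Real.tan (ω ℓ / 2)
          ≤ Real.sqrt 2 * ((ω ℓ / 2) / (Real.sqrt 2 / 2)) := by
            exact mul_le_mul_of_nonneg_left htanω hs2.le
        _ = ω ℓ := h2'
    linarith [hkey ▸ hlt]
  -- conclude
  have hωub : ω ℓ < k * Real.pi / ℓ := h2
  have habs : |ω ℓ - Real.pi * k / ℓ| = δ / ℓ := by
    rw [abs_of_nonpos, hδ]
    · field_simp; ring
    · have : Real.pi * k / ℓ = k * Real.pi / ℓ := by ring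
      rw [this]; linarith
  rw [habs]
  rw [div_le_div_iff₀ hℓ0 (by positivity)]
  have : δ ≤ k * Real.pi / ℓ := hδω.trans hωub.le
  calc δ * (ℓ:ℝ)^2 ≤ (k * Real.pi / ℓ) * (ℓ:ℝ)^2 := by nlinarith
    _ = k * Real.pi * ℓ := by field_simp
end

section
/- Let $f: [-1/2, 1/2] \to \mathbb{C}$ be square-integrable. Extend $f$ to $[-1/2, 3/2]$ by $f(1-x) = i\overline{f(x)}$ and then to $\mathbb{R}$ by $f(x+2) = -f(x)$. Then in the Fourier series of the resulting period-4 function, $f(x) = \sum_{n \in \mathbb{Z}} c_n e^{-i n \pi x/2}$, all even coefficients vanish ($c_{2m} = 0$ for all $m \in \mathbb{Z}$) and the odd coefficients satisfy $c_{2k} + i^{2k-1}\overline{c_{2k}} = 0$ for all $k \in \mathbb{Z}+1/2$, i.e., $c_{2k} \in \mathbb{R}\cdot e^{i\pi(-k/2 - 1/4)}$. -/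
/-! For even `n` the integrand `g x * exp (iπnx/2)` is `2`-antiperiodic, so its integral over
a full period `4` vanishes. For the phase, the reflection law gives
`conj (g x * exp (iπnx/2)) = -i · i⁻ⁿ · g (1 - x) * exp (iπn(1 - x)/2)`,
and the substitution `x ↦ 1 - x` maps one period onto another, so
`conj cₙ = -i · i⁻ⁿ · cₙ`. -/

open Complex Real MeasureTheory
open scoped ComplexConjugate

namespace Function.Antiperiodic

variable {α β : Type*} {f g : α → β} {c : α}

theorem mul_periodic [Add α] [Mul β] [HasDistribNeg β] (hf : Antiperiodic f c)
    (hg : Periodic g c) : Antiperiodic (f * g) c := by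
  intro x
  simp [hf x, hg x]

theorem intervalIntegral_add_two_mul_eq_zero {E : Type*} [NormedAddCommGroup E] [NormedSpace ℝ E]
    {f : ℝ → E} {c : ℝ} (hf : Antiperiodic f c) (t : ℝ) :
    ∫ x in t..t + 2 * c, f x = 0 := by
  have : IsAddTorsionFree E := .of_isTorsionFree ℝ E
  refine self_eq_neg.mp ?_
  calc ∫ x in t..t + 2 * c, f x
      = ∫ x in t + c..t + c + 2 * c, f x := (hf.periodic_two_mul.intervalIntegral_add_eq _ _)
    _ = ∫ x in t..t + 2 * c, f (x + c) := by
        rw [intervalIntegral.integral_comp_add_right, add_right_comm]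
    _ = -∫ x in t..t + 2 * c, f x := by simp only [hf _, intervalIntegral.integral_neg]

end Function.Antiperiodic

theorem periodic_exp_I_mul_int_mul_pi_mul_div_two (n : ℤ) :
    Function.Periodic (fun x : ℝ => exp (I * n * π * x / 2)) 4 := by
  intro x
  simp only
  rw [show I * n * π * ((x + 4 : ℝ) : ℂ) / 2 = I * n * π * x / 2 + n * (2 * π * I) by
      push_cast; ring, Complex.exp_add, exp_int_mul_two_pi_mul_I, mul_one]

theorem periodic_exp_I_mul_two_mul_int_mul_pi_mul_div_two (m : ℤ) :
    Function.Periodic (fun x : ℝ => exp (I * (2 * m : ℤ) * π * x / 2)) 2 := by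
  intro x
  simp only
  rw [show I * (2 * m : ℤ) * π * ((x + 2 : ℝ) : ℂ) / 2
      = I * (2 * m : ℤ) * π * x / 2 + m * (2 * π * I) by push_cast; ring,
    Complex.exp_add, exp_int_mul_two_pi_mul_I, mul_one]

theorem exp_I_mul_int_mul_pi_div_two (n : ℤ) : exp (I * n * π / 2) = I ^ n := by
  rw [show I * n * π / 2 = n * (π / 2 * I) by ring, exp_int_mul, exp_pi_div_two_mul_I]

theorem conj_exp_I_mul_int_mul_pi_mul_div_two (n : ℤ) (x : ℝ) :
    conj (exp (I * n * π * x / 2)) = I ^ (-n) * exp (I * n * π * (1 - x : ℝ) / 2) := by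
  rw [← exp_conj, ← exp_I_mul_int_mul_pi_div_two, ← Complex.exp_add]
  congr 1
  simp only [map_div₀, map_mul, conj_I, conj_ofReal, map_intCast, map_ofNat]
  push_cast
  ring

theorem integral_mul_exp_I_mul_two_mul_int_mul_pi_mul_div_two_eq_zero {g : ℝ → ℂ}
    (hg : Function.Antiperiodic g 2) (m : ℤ) (t : ℝ) :
    ∫ x in t..t + 4, g x * exp (I * (2 * m : ℤ) * π * x / 2) = 0 := by
  have hG := hg.mul_periodic (periodic_exp_I_mul_two_mul_int_mul_pi_mul_div_two m)
  simpa only [show (2 : ℝ) * 2 = 4 by norm_num, Pi.mul_apply] using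
    hG.intervalIntegral_add_two_mul_eq_zero t

theorem conj_integral_mul_exp_I_mul_int_mul_pi_mul_div_two {g : ℝ → ℂ}
    (hrefl : ∀ x : ℝ, g (1 - x) = I * conj (g x)) (hg : Function.Periodic g 4)
    (n : ℤ) (t : ℝ) :
    conj (∫ x in t..t + 4, g x * exp (I * n * π * x / 2)) =
      -I * I ^ (-n) * ∫ x in t..t + 4, g x * exp (I * n * π * x / 2) := by
  set G : ℝ → ℂ := fun x => g x * exp (I * n * π * x / 2)
  have hG : Function.Periodic G 4 := hg.mul (periodic_exp_I_mul_int_mul_pi_mul_div_two n)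
  have hconj : ∀ x, conj (G x) = -I * I ^ (-n) * G (1 - x) := by
    intro x
    have hgx : conj (g x) = -I * g (1 - x) := by
      rw [hrefl, ← mul_assoc, neg_mul, I_mul_I, neg_neg, one_mul]
    simp only [G, map_mul, hgx, conj_exp_I_mul_int_mul_pi_mul_div_two]
    ring
  calc conj (∫ x in t..t + 4, G x)
      = ∫ x in t..t + 4, -I * I ^ (-n) * G (1 - x) := by
        simp only [← hconj, intervalIntegral.intervalIntegral_conj]
    _ = -I * I ^ (-n) * ∫ x in (1 - (t + 4))..(1 - (t + 4)) + 4, G x := by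
        rw [intervalIntegral.integral_const_mul, intervalIntegral.integral_comp_sub_left G,
          show 1 - (t + 4) + 4 = 1 - t by ring]
    _ = -I * I ^ (-n) * ∫ x in t..t + 4, G x := by rw [hG.intervalIntegral_add_eq]

theorem extension_fourier_coefficients_general (g : ℝ → ℂ)
    (hrefl : ∀ x : ℝ, g (1 - x) = Complex.I * (starRingEnd ℂ) (g x))
    (hanti : ∀ x : ℝ, g (x + 2) = - g x)
    (c : ℤ → ℂ)
    (hc : ∀ n : ℤ, c n = (1/4 : ℂ) *
      ∫ x in (-2:ℝ)..2, g x * Complex.exp (Complex.I * (n : ℂ) * (Real.pi : ℂ) * (x : ℂ) / 2)) :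
    (∀ m : ℤ, c (2*m) = 0) ∧
    (∀ n : ℤ, Odd n → c n + Complex.I ^ (n - 1) * (starRingEnd ℂ) (c n) = 0) := by
  have hc' (n : ℤ) :
      c n = 1 / 4 * ∫ x in (-2)..(-2) + 4, g x * exp (I * n * π * x / 2) := by
    norm_num [hc]
  have hper : Function.Periodic g 4 := by
    simpa only [show (2 : ℝ) * 2 = 4 by norm_num] using
      Function.Antiperiodic.periodic_two_mul hanti
  refine ⟨fun m => ?_, fun n _ => ?_⟩
  · rw [hc', integral_mul_exp_I_mul_two_mul_int_mul_pi_mul_div_two_eq_zero hanti, mul_zero]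
  · have hI : I ^ (n - 1) * I * I ^ (-n) = 1 := by
      rw [zpow_sub_one₀ I_ne_zero, zpow_neg, inv_mul_cancel_right₀ I_ne_zero,
        mul_inv_cancel₀ (zpow_ne_zero n I_ne_zero)]
    rw [hc', map_mul, conj_integral_mul_exp_I_mul_int_mul_pi_mul_div_two hrefl hper]
    simp only [map_div₀, map_one, map_ofNat]
    linear_combination (-1 / 4 * ∫ x in (-2)..(-2) + 4, g x * exp (I * n * π * x / 2)) * hI

/-- Symmetry constraints on the Fourier coefficients of the period-4 extension:
if `g` extends a square-integrable `f` on `[-1/2,1/2]` with the reflection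
`g(1-x) = i conj(g(x))` and the antiperiodicity `g(x+2) = -g(x)`, then in the
Fourier series `g(x) = Σₙ cₙ e^{-inπx/2}` all even coefficients vanish and the
odd coefficients satisfy `c_{2k} + i^{2k-1} conj(c_{2k}) = 0`. -/
theorem extension_fourier_coefficients (f g : ℝ → ℂ)
    (hf : MemLp f 2 (volume.restrict (Set.Icc (-(1:ℝ)/2) (1/2))))
    (hgf : ∀ x ∈ Set.Icc (-(1:ℝ)/2) (1/2), g x = f x)
    (hrefl : ∀ x : ℝ, g (1 - x) = Complex.I * (starRingEnd ℂ) (g x))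
    (hanti : ∀ x : ℝ, g (x + 2) = - g x)
    (hint : IntervalIntegrable g volume (-2) 2)
    (c : ℤ → ℂ)
    (hc : ∀ n : ℤ, c n = (1/4 : ℂ) *
      ∫ x in (-2:ℝ)..2, g x * Complex.exp (Complex.I * (n : ℂ) * (Real.pi : ℂ) * (x : ℂ) / 2)) :
    (∀ m : ℤ, c (2*m) = 0) ∧
    (∀ n : ℤ, Odd n → c n + Complex.I ^ (n - 1) * (starRingEnd ℂ) (c n) = 0) :=
  extension_fourier_coefficients_general g hrefl hanti c hc
end

section
/- Fix a half-integer $k > 0$ and a complex constant $C^+ \neq 0$. Let $\omega \in \mathbb{R} \setminus 2\pi\mathbb{Z}$ and $\Lambda$ satisfy $\Lambda^2 + (2\cos\omega - 4)\Lambda + 1 = 0$, and set $C^- = \frac{2 + \sqrt{2}\cos(3\pi/4+\omega) - \Lambda}{\sqrt{2}(1-\cos\omega)}\,\overline{C^+}$ and $f(x') = C^+ e^{i\omega x'} + C^- e^{-i\omega x'}$. Then for every half-integer $x'$, the expression $2f(x') + \frac{\lambda^3}{\sqrt 2}f(x'+1) + \frac{\lambda^{-3}}{\sqrt 2}f(x'-1)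 - \sqrt 2\,\overline{f(x')} + \frac{1}{\sqrt 2}\overline{f(x'+1)} + \frac{1}{\sqrt 2}\overline{f(x'-1)}$ equals $\Lambda f(x')$, where $\lambda = e^{i\pi/4}$. -/
open Complex Real

/-- The bulk eigenfunction equation for the discrete analytic continuation
operator `P` in the lattice strip: if `Λ` solves the dispersion relation
`Λ² + (2cos ω - 4)Λ + 1 = 0` and `f(x') = C⁺e^{iωx'} + C⁻e^{-iωx'}` with
`C⁻ = (2 + √2 cos(3π/4+ω) - Λ)/(√2(1-cos ω)) · conj(C⁺)`, then
`(Pf)(x') = Λ f(x')` at every half-integer `x'` (away from the boundary),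
where `λ = e^{iπ/4}`. -/
theorem discrete_dispersion_eigenfunction (k : ℝ) (hk : ∃ n : ℕ, k = n + 1/2)
    (Cp : ℂ) (hCp : Cp ≠ 0)
    (ω Λ : ℝ) (hω : ∀ n : ℤ, ω ≠ 2 * Real.pi * n)
    (hΛ : Λ^2 + (2 * Real.cos ω - 4) * Λ + 1 = 0)
    (Cm : ℂ)
    (hCm : Cm = (((2 + Real.sqrt 2 * Real.cos (3*Real.pi/4 + ω) - Λ)
        / (Real.sqrt 2 * (1 - Real.cos ω)) : ℝ) : ℂ) * (starRingEnd ℂ) Cp)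
    (f : ℝ → ℂ)
    (hf : ∀ x : ℝ, f x = Cp * Complex.exp (Complex.I * (ω : ℂ) * (x : ℂ))
        + Cm * Complex.exp (-Complex.I * (ω : ℂ) * (x : ℂ)))
    (lam : ℂ) (hlam : lam = Complex.exp (Complex.I * (Real.pi : ℂ) / 4)) :
    ∀ x : ℝ, (∃ n : ℤ, x = n + 1/2) →
      2 * f x + lam^3 / (Real.sqrt 2 : ℂ) * f (x+1)
        + lam^(-3 : ℤ) / (Real.sqrt 2 : ℂ) * f (x-1)
        - (Real.sqrt 2 : ℂ) * (starRingEnd ℂ) (f x)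
        + 1 / (Real.sqrt 2 : ℂ) * (starRingEnd ℂ) (f (x+1))
        + 1 / (Real.sqrt 2 : ℂ) * (starRingEnd ℂ) (f (x-1))
      = (Λ : ℂ) * f x := by
  intro x _
  -- basic real facts
  have ht2 : Real.sqrt 2 ^ 2 = 2 := Real.sq_sqrt (by norm_num)
  have htpos : (0:ℝ) < Real.sqrt 2 := Real.sqrt_pos.mpr (by norm_num)
  have hcne : Real.cos ω ≠ 1 := by
    intro h
    obtain ⟨n, hn⟩ := (Real.cos_eq_one_iff ω).mp h
    exact hω n (by linarith)
  have hbne : Real.sqrt 2 * (1 - Real.cos ω) ≠ 0 :=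
    mul_ne_zero (ne_of_gt htpos) (sub_ne_zero.mpr (Ne.symm hcne))
  have hcs : Real.cos ω ^ 2 + Real.sin ω ^ 2 = 1 := by
    rw [add_comm]; exact Real.sin_sq_add_cos_sq ω
  have hA2 : Real.sqrt 2 * Real.cos (3*Real.pi/4 + ω) = -(Real.cos ω + Real.sin ω) := by
    rw [show (3*Real.pi/4) = Real.pi - Real.pi/4 by ring, Real.cos_add, Real.cos_pi_sub,
      Real.sin_pi_sub, Real.cos_pi_div_four, Real.sin_pi_div_four]
    linear_combination (-(Real.cos ω + Real.sin ω)/2) * ht2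
  have hA3 : Real.sqrt 2 * Real.cos (3*Real.pi/4 - ω) = Real.sin ω - Real.cos ω := by
    rw [show (3*Real.pi/4) = Real.pi - Real.pi/4 by ring, Real.cos_sub, Real.cos_pi_sub,
      Real.sin_pi_sub, Real.cos_pi_div_four, Real.sin_pi_div_four]
    linear_combination ((Real.sin ω - Real.cos ω)/2) * ht2
  obtain ⟨r, hr⟩ : ∃ r:ℝ, r = (2 + Real.sqrt 2 * Real.cos (3*Real.pi/4 + ω) - Λ)
      / (Real.sqrt 2 * (1 - Real.cos ω)) := ⟨_, rfl⟩
  rw [← hr] at hCm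
  have k1 : 2 - Real.cos ω - Real.sin ω - r * (Real.sqrt 2 * (1 - Real.cos ω)) = Λ := by
    rw [hr, div_mul_cancel₀ _ hbne]; linear_combination -hA2
  have key : (2 - Real.cos ω - Real.sin ω - Λ) * (2 - Real.cos ω + Real.sin ω - Λ)
      = (Real.sqrt 2 * (1 - Real.cos ω))^2 := by
    linear_combination hΛ - hcs - (1 - Real.cos ω)^2 * ht2
  have k2 : r * (2 - Real.cos ω + Real.sin ω - Λ) = Real.sqrt 2 * (1 - Real.cos ω) := by
    refine mul_right_cancel₀ hbne ?_
    linear_combination -(2 - Real.cos ω + Real.sin ω - Λ) * k1 + key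
  have K1r : 2*Real.sqrt 2 + 2*Real.cos (3*Real.pi/4 + ω) - 2*r + 2*r*Real.cos ω
      = Λ*Real.sqrt 2 := by
    linear_combination Real.sqrt 2 * k1 + Real.sqrt 2 * hA2
      + (r*(1 - Real.cos ω) - Real.cos (3*Real.pi/4 + ω)) * ht2
  have K2r : 2*r*Real.sqrt 2 + 2*r*Real.cos (3*Real.pi/4 - ω) - 2 + 2*Real.cos ω
      = Λ*(r*Real.sqrt 2) := by
    linear_combination Real.sqrt 2 * k2 + r*Real.sqrt 2 * hA3
      + ((1 - Real.cos ω) - r*Real.cos (3*Real.pi/4 - ω)) * ht2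
  -- complex constants
  have t2ne : ((Real.sqrt 2 : ℝ) : ℂ) ≠ 0 := Complex.ofReal_ne_zero.mpr (ne_of_gt htpos)
  have ht2c : ((Real.sqrt 2 : ℝ) : ℂ)^2 = 2 := by exact_mod_cast congrArg (Complex.ofReal) ht2
  have hcos : ∀ θ:ℝ, Complex.exp (Complex.I*(θ:ℂ)) + Complex.exp (-(Complex.I*(θ:ℂ)))
      = 2*((Real.cos θ :ℝ):ℂ) := by
    intro θ
    rw [show Complex.I*(θ:ℂ) = (θ:ℂ)*Complex.I from mul_comm _ _,
        show -((θ:ℂ)*Complex.I) = ((-θ:ℝ):ℂ)*Complex.I by push_cast; ring,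
        Complex.exp_mul_I, Complex.exp_mul_I, ← Complex.ofReal_cos, ← Complex.ofReal_sin,
        ← Complex.ofReal_cos, ← Complex.ofReal_sin, Real.cos_neg, Real.sin_neg]
    push_cast; ring
  have hL3 : lam^3 = Complex.exp (Complex.I*((3*Real.pi/4:ℝ):ℂ)) := by
    rw [hlam, ← Complex.exp_nat_mul]; congr 1; push_cast; ring
  have hLinv : lam^(-3:ℤ) = (lam^3)⁻¹ := by
    rw [zpow_neg, show (3:ℤ) = ((3:ℕ):ℤ) from rfl, zpow_natCast]
  have hL3inv : (lam^3)⁻¹ = Complex.exp (-(Complex.I*((3*Real.pi/4:ℝ):ℂ))) := by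
    rw [hL3, ← Complex.exp_neg]
  -- base exponentials
  obtain ⟨u, hu⟩ : ∃ u:ℂ, u = Complex.exp (Complex.I * (ω:ℂ) * (x:ℂ)) := ⟨_, rfl⟩
  obtain ⟨uv, huv⟩ : ∃ uv:ℂ, uv = Complex.exp (-Complex.I * (ω:ℂ) * (x:ℂ)) := ⟨_, rfl⟩
  obtain ⟨w, hw⟩ : ∃ w:ℂ, w = Complex.exp (Complex.I * (ω:ℂ)) := ⟨_, rfl⟩
  obtain ⟨wv, hwv⟩ : ∃ wv:ℂ, wv = Complex.exp (-(Complex.I * (ω:ℂ))) := ⟨_, rfl⟩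
  have e1 : Complex.exp (Complex.I * (ω:ℂ) * ((x+1:ℝ):ℂ)) = u * w := by
    rw [hu, hw, ← Complex.exp_add]; congr 1; push_cast; try ring
  have e2 : Complex.exp (Complex.I * (ω:ℂ) * ((x-1:ℝ):ℂ)) = u * wv := by
    rw [hu, hwv, ← Complex.exp_add]; congr 1; push_cast; try ring
  have e3 : Complex.exp (-Complex.I * (ω:ℂ) * ((x+1:ℝ):ℂ)) = uv * wv := by
    rw [huv, hwv, ← Complex.exp_add]; congr 1; push_cast; try ring
  have e4 : Complex.exp (-Complex.I * (ω:ℂ) * ((x-1:ℝ):ℂ)) = uv * w := by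
    rw [huv, hw, ← Complex.exp_add]; congr 1; push_cast; try ring
  have hcu : (starRingEnd ℂ) u = uv := by
    rw [hu, huv, ← Complex.exp_conj]; congr 1
    rw [map_mul, map_mul, Complex.conj_I, Complex.conj_ofReal, Complex.conj_ofReal]; try ring
  have hcuv : (starRingEnd ℂ) uv = u := by
    rw [hu, huv, ← Complex.exp_conj]; congr 1
    rw [map_mul, map_mul, map_neg, Complex.conj_I, Complex.conj_ofReal,
      Complex.conj_ofReal]; try ring
  have hcw : (starRingEnd ℂ) w = wv := by
    rw [hw, hwv, ← Complex.exp_conj]; congr 1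
    rw [map_mul, Complex.conj_I, Complex.conj_ofReal]; try ring
  have hcwv : (starRingEnd ℂ) wv = w := by
    rw [hw, hwv, ← Complex.exp_conj]; congr 1
    rw [map_neg, map_mul, Complex.conj_I, Complex.conj_ofReal]; try ring
  -- trigonometric sums
  have hwsum : w + wv = 2*((Real.cos ω :ℝ):ℂ) := by rw [hw, hwv]; exact hcos ω
  have hLw : lam^3 * w + (lam^3)⁻¹ * wv = 2*((Real.cos (3*Real.pi/4 + ω) :ℝ):ℂ) := by
    rw [hL3inv, hL3, hw, hwv, ← Complex.exp_add, ← Complex.exp_add,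
      show Complex.I*((3*Real.pi/4:ℝ):ℂ) + Complex.I*(ω:ℂ)
        = Complex.I*(((3*Real.pi/4 + ω :ℝ)):ℂ) by push_cast; ring,
      show -(Complex.I*((3*Real.pi/4:ℝ):ℂ)) + -(Complex.I*(ω:ℂ))
        = -(Complex.I*(((3*Real.pi/4 + ω :ℝ)):ℂ)) by push_cast; ring]
    exact hcos _
  have hLw' : lam^3 * wv + (lam^3)⁻¹ * w = 2*((Real.cos (3*Real.pi/4 - ω) :ℝ):ℂ) := by
    rw [hL3inv, hL3, hw, hwv, ← Complex.exp_add, ← Complex.exp_add,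
      show Complex.I*((3*Real.pi/4:ℝ):ℂ) + -(Complex.I*(ω:ℂ))
        = Complex.I*(((3*Real.pi/4 - ω :ℝ)):ℂ) by push_cast; ring,
      show -(Complex.I*((3*Real.pi/4:ℝ):ℂ)) + Complex.I*(ω:ℂ)
        = -(Complex.I*(((3*Real.pi/4 - ω :ℝ)):ℂ)) by push_cast; ring]
    exact hcos _
  -- cast coefficient identities
  have K1c : 2*((Real.sqrt 2:ℝ):ℂ) + 2*((Real.cos (3*Real.pi/4 + ω):ℝ):ℂ) - 2*(r:ℂ)
      + 2*(r:ℂ)*((Real.cos ω:ℝ):ℂ) = (Λ:ℂ)*((Real.sqrt 2:ℝ):ℂ) := by exact_mod_cast K1r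
  have K2c : 2*(r:ℂ)*((Real.sqrt 2:ℝ):ℂ) + 2*(r:ℂ)*((Real.cos (3*Real.pi/4 - ω):ℝ):ℂ) - 2
      + 2*((Real.cos ω:ℝ):ℂ) = (Λ:ℂ)*((r:ℂ)*((Real.sqrt 2:ℝ):ℂ)) := by exact_mod_cast K2r
  have K1 : 2*((Real.sqrt 2:ℝ):ℂ) + lam^3*w + (lam^3)⁻¹*wv
      - (r:ℂ)*((Real.sqrt 2:ℝ):ℂ)^2 + (r:ℂ)*w + (r:ℂ)*wv = (Λ:ℂ)*((Real.sqrt 2:ℝ):ℂ) := by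
    linear_combination hLw + (r:ℂ)*hwsum + K1c - (r:ℂ)*ht2c
  have K2 : 2*(r:ℂ)*((Real.sqrt 2:ℝ):ℂ) + (r:ℂ)*(lam^3)*wv + (r:ℂ)*(lam^3)⁻¹*w
      - ((Real.sqrt 2:ℝ):ℂ)^2 + wv + w = (Λ:ℂ)*((r:ℂ)*((Real.sqrt 2:ℝ):ℂ)) := by
    linear_combination (r:ℂ)*hLw' + hwsum + K2c - ht2c
  -- conjugate of Cm
  have hdiv : ∀ z:ℂ, z / ((Real.sqrt 2:ℝ):ℂ) = z * ((Real.sqrt 2:ℝ):ℂ)/2 := by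
    intro z
    rw [div_eq_iff t2ne, div_mul_eq_mul_div, eq_div_iff (two_ne_zero)]
    linear_combination -z*ht2c
  -- rewrite the goal
  rw [hf x, hf (x+1), hf (x-1), hCm, hLinv, e1, e2, e3, e4, ← hu, ← huv,
    hdiv (lam^3), hdiv ((lam^3)⁻¹), hdiv 1]
  simp only [map_add, map_mul, Complex.conj_conj, Complex.conj_ofReal, hcu, hcuv, hcw, hcwv]
  linear_combination (Cp*u*((Real.sqrt 2:ℝ):ℂ)/2)*K1
    + ((starRingEnd ℂ) Cp*uv*((Real.sqrt 2:ℝ):ℂ)/2)*K2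
    - Cp*u*(1 - (r:ℂ)*((Real.sqrt 2:ℝ):ℂ)/2 - (Λ:ℂ)/2)*ht2c
    - (starRingEnd ℂ) Cp*uv*((r:ℂ) - ((Real.sqrt 2:ℝ):ℂ)/2 - (Λ:ℂ)*(r:ℂ)/2)*ht2c
end
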